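/- (Theorem 3.1, curl-free part) For all 1 ≤ i, j ≤ n−1, setting U⁰_{ij} = τ_i · c_i s_jᵀ ∈ ℝ^{n×(n−1)} and V⁰_{ij} = τ_j · s_i c_jᵀ ∈ ℝ^{(n−1)×n}, one has U⁰_{ij} A − Bᵀ V⁰_{ij} Bᵀ = 0 and −B U⁰_{ij} B + A V⁰_{ij} = 0; that is, (U⁰_{ij}, V⁰_{ij}) is an eigen-solution of the discrete Maxwell eigenvalue problem with eigenvalue 0. -/
import Mathlib


open Matrix Real

/-- `τ_i = -2 sin(iπ/(2n))`. -/
noncomputable def tau (n i : ℕ) : ℝ := -2 * Real.sin ((i : ℝ) * Real.pi / (2 * n))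

/-- Stiffness matrix `A ∈ ℝ^{(n-1)×(n-1)}`. -/
def Amat (n : ℕ) : Matrix (Fin (n - 1)) (Fin (n - 1)) ℝ :=
  Matrix.of fun k l =>
    if (k : ℕ) = (l : ℕ) then 2
    else if (k : ℕ) + 1 = (l : ℕ) ∨ (l : ℕ) + 1 = (k : ℕ) then -1 else 0

/-- Discrete divergence matrix `B ∈ ℝ^{(n-1)×n}`. -/
def Bmat (n : ℕ) : Matrix (Fin (n - 1)) (Fin n) ℝ :=
  Matrix.of fun k l =>
    if (l : ℕ) = (k : ℕ) then -1 else if (l : ℕ) = (k : ℕ) + 1 then 1 else 0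

/-- The vector `s_j ∈ ℝ^{n-1}` with entries `(s_j)_k = sin(kjπ/n)`. -/
noncomputable def svec (n j : ℕ) : Fin (n - 1) → ℝ :=
  fun k => Real.sin (((((k : ℕ) + 1) * j : ℕ) : ℝ) * Real.pi / n)

/-- The vector `c_j ∈ ℝ^n` with entries `(c_j)_k = ν_j cos((2k-1)jπ/(2n))`,
`ν_0 = 1/√2`, `ν_j = 1` for `1 ≤ j ≤ n-1`. -/
noncomputable def cvec (n j : ℕ) : Fin n → ℝ :=
  fun k =>
    (if j = 0 then 1 / Real.sqrt 2 else 1) *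
      Real.cos (((2 * (k : ℕ) + 1) * j : ℕ) * Real.pi / (2 * n))

lemma sum_if_eq (N a : ℕ) (f : ℕ → ℝ) :
    (∑ m : Fin N, if (m : ℕ) = a then f (m : ℕ) else 0) = if a < N then f a else 0 := by
  split_ifs with ha
  · rw [Finset.sum_eq_single (⟨a, ha⟩ : Fin N)]
    · simp
    · intro b _ hb
      rw [if_neg]
      simpa [Fin.ext_iff] using hb
    · simp
  · apply Finset.sum_eq_zero
    intro m _
    rw [if_neg]
    intro h
    exact ha (h ▸ m.isLt)

lemma sum_if_eq' (N a : ℕ) (f : ℕ → ℝ) :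
    (∑ m : Fin N, if (m : ℕ) + 1 = a then f ((m : ℕ) + 1) else 0)
      = if 1 ≤ a ∧ a ≤ N then f a else 0 := by
  split_ifs with ha
  · rw [Finset.sum_eq_single (⟨a - 1, by omega⟩ : Fin N)]
    · rw [if_pos (by simp only [Fin.val_mk]; omega)]
      congr 1
      simp only [Fin.val_mk]
      omega
    · intro b _ hb
      apply if_neg
      intro h
      apply hb
      apply Fin.ext
      simp only [Fin.val_mk]
      omega
    · simp
  · apply Finset.sum_eq_zero
    intro m _
    rw [if_neg]
    have := m.isLt
    omega

lemma vmv_mul {m p q : Type*} [Fintype p] (x : m → ℝ) (y : p → ℝ) (M : Matrix p q ℝ) :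
    vecMulVec x y * M = vecMulVec x (y ᵥ* M) := by
  ext a b
  simp [vecMulVec_apply, mul_apply, vecMul, dotProduct, Finset.mul_sum, mul_assoc]

lemma mul_vmv {m p q : Type*} [Fintype p] (M : Matrix m p ℝ) (x : p → ℝ) (y : q → ℝ) :
    M * vecMulVec x y = vecMulVec (M *ᵥ x) y := by
  ext a b
  simp only [vecMulVec_apply, mul_apply, mulVec, dotProduct, Finset.sum_mul]
  exact Finset.sum_congr rfl fun c _ => by ring

lemma vmv_smul_right {m p : Type*} (x : m → ℝ) (a : ℝ) (y : p → ℝ) :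
    vecMulVec x (a • y) = a • vecMulVec x y := by
  ext k l
  simp [vecMulVec_apply]
  ring

lemma vmv_smul_left {m p : Type*} (a : ℝ) (x : m → ℝ) (y : p → ℝ) :
    vecMulVec (a • x) y = a • vecMulVec x y := by
  ext k l
  simp [vecMulVec_apply]
  ring

/-- A = B Bᵀ -/
lemma Amat_eq (n : ℕ) : Amat n = Bmat n * (Bmat n)ᵀ := by
  ext k l
  simp only [mul_apply, transpose_apply, Bmat, Amat, Matrix.of_apply]
  have hk := k.isLt
  have hl := l.isLt
  by_cases h1 : (k : ℕ) = (l : ℕ)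
  · have : ∀ m : Fin n, ((if (m : ℕ) = (k : ℕ) then (-1 : ℝ) else if (m : ℕ) = (k : ℕ) + 1 then 1 else 0) *
        (if (m : ℕ) = (l : ℕ) then (-1 : ℝ) else if (m : ℕ) = (l : ℕ) + 1 then 1 else 0))
        = (if (m : ℕ) = (k : ℕ) then 1 else 0) + (if (m : ℕ) = (k : ℕ) + 1 then 1 else 0) := by
      intro m
      split_ifs <;> first | ring1 | (exfalso; omega)
    rw [Finset.sum_congr rfl fun m _ => this m, Finset.sum_add_distrib,
      sum_if_eq n (k : ℕ) (fun _ => 1), sum_if_eq n ((k : ℕ) + 1) (fun _ => 1)]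
    rw [if_pos h1, if_pos (by omega), if_pos (by omega)]
    norm_num
  · by_cases h2 : (k : ℕ) + 1 = (l : ℕ)
    · have : ∀ m : Fin n, ((if (m : ℕ) = (k : ℕ) then (-1 : ℝ) else if (m : ℕ) = (k : ℕ) + 1 then 1 else 0) *
          (if (m : ℕ) = (l : ℕ) then (-1 : ℝ) else if (m : ℕ) = (l : ℕ) + 1 then 1 else 0))
          = (if (m : ℕ) = (l : ℕ) then (-1 : ℝ) else 0) := by
        intro m
        split_ifs <;> first | ring1 | (exfalso; omega)
      rw [Finset.sum_congr rfl fun m _ => this m, sum_if_eq n (l : ℕ) (fun _ => -1)]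
      rw [if_neg h1, if_pos (Or.inl h2), if_pos (by omega)]
    · by_cases h3 : (l : ℕ) + 1 = (k : ℕ)
      · have : ∀ m : Fin n, ((if (m : ℕ) = (k : ℕ) then (-1 : ℝ) else if (m : ℕ) = (k : ℕ) + 1 then 1 else 0) *
            (if (m : ℕ) = (l : ℕ) then (-1 : ℝ) else if (m : ℕ) = (l : ℕ) + 1 then 1 else 0))
            = (if (m : ℕ) = (k : ℕ) then (-1 : ℝ) else 0) := by
          intro m
          split_ifs <;> first | ring1 | (exfalso; omega)
        rw [Finset.sum_congr rfl fun m _ => this m, sum_if_eq n (k : ℕ) (fun _ => -1)]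
        rw [if_neg h1, if_pos (Or.inr h3), if_pos (by omega)]
      · have : ∀ m : Fin n, ((if (m : ℕ) = (k : ℕ) then (-1 : ℝ) else if (m : ℕ) = (k : ℕ) + 1 then 1 else 0) *
            (if (m : ℕ) = (l : ℕ) then (-1 : ℝ) else if (m : ℕ) = (l : ℕ) + 1 then 1 else 0)) = 0 := by
          intro m
          split_ifs <;> first | ring1 | (exfalso; omega)
        rw [Finset.sum_congr rfl fun m _ => this m, Finset.sum_const, smul_zero]
        rw [if_neg h1, if_neg (by omega)]

/-- sᵀ B = τ cᵀ -/
lemma svec_vecMul (n j : ℕ) (hn : 2 ≤ n) (hj : j ≠ 0) :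
    svec n j ᵥ* Bmat n = tau n j • cvec n j := by
  have hn0 : (n : ℝ) ≠ 0 := by positivity
  funext l
  have hl := l.isLt
  simp only [vecMul, dotProduct, Bmat, Matrix.of_apply, Pi.smul_apply, smul_eq_mul]
  set g : ℕ → ℝ := fun m => Real.sin ((m : ℝ) * j * Real.pi / n) with hg
  have hsv : ∀ k : Fin (n - 1), svec n j k = g ((k : ℕ) + 1) := by
    intro k
    simp only [svec, hg]
    push_cast
    ring_nf
  have key : ∀ k : Fin (n - 1),
      svec n j k * (if (l : ℕ) = (k : ℕ) then (-1 : ℝ) else if (l : ℕ) = (k : ℕ) + 1 then 1 else 0)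
      = (if (k : ℕ) = (l : ℕ) then -g ((k : ℕ) + 1) else 0)
        + (if (k : ℕ) + 1 = (l : ℕ) then g ((k : ℕ) + 1) else 0) := by
    intro k
    rw [hsv k]
    split_ifs <;> first | ring1 | (exfalso; omega)
  rw [Finset.sum_congr rfl fun k _ => key k, Finset.sum_add_distrib,
    sum_if_eq (n - 1) (l : ℕ) (fun m => -g (m + 1)), sum_if_eq' (n - 1) (l : ℕ) g]
  have g0 : g 0 = 0 := by simp [hg]
  have gn : g n = 0 := by
    have harg : (n : ℝ) * j * Real.pi / n = j * Real.pi := by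
      field_simp
      try ring
    simp only [hg]
    rw [harg]
    exact Real.sin_nat_mul_pi j
  have main : g (l : ℕ) - g ((l : ℕ) + 1)
      = tau n j * cvec n j l := by
    simp only [hg, tau, cvec, if_neg hj, one_mul]
    rw [Real.sin_sub_sin]
    push_cast
    have e1 : (((l : ℕ) : ℝ) * j * Real.pi / n - (((l : ℕ) : ℝ) + 1) * j * Real.pi / n) / 2
        = -((j : ℝ) * Real.pi / (2 * n)) := by
      field_simp
      try ring
    have e2 : (((l : ℕ) : ℝ) * j * Real.pi / n + (((l : ℕ) : ℝ) + 1) * j * Real.pi / n) / 2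
        = (2 * ((l : ℕ) : ℝ) + 1) * j * Real.pi / (2 * n) := by
      field_simp
      try ring
    rw [e1, e2, Real.sin_neg]
    ring
  rcases Nat.eq_zero_or_pos (l : ℕ) with h0 | hpos
  · rw [h0]
    rw [if_pos (by omega), if_neg (by omega)]
    rw [← h0] at g0 ⊢
    rw [← main, g0]
    ring
  · by_cases hend : (l : ℕ) = n - 1
    · rw [if_neg (by omega), if_pos (by omega)]
      have : (l : ℕ) + 1 = n := by omega
      rw [← main, this, gn]
      ring
    · rw [if_pos (by omega), if_pos (by omega)]
      rw [← main]
      ring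

/-- B c = τ s -/
lemma cvec_mulVec (n j : ℕ) (hn : 2 ≤ n) (hj : j ≠ 0) :
    Bmat n *ᵥ cvec n j = tau n j • svec n j := by
  funext k
  have hk := k.isLt
  simp only [mulVec, dotProduct, Bmat, Matrix.of_apply, Pi.smul_apply, smul_eq_mul]
  set f : ℕ → ℝ := fun m => Real.cos ((2 * (m : ℝ) + 1) * j * Real.pi / (2 * n)) with hf
  have hcv : ∀ l : Fin n, cvec n j l = f (l : ℕ) := by
    intro l
    simp only [cvec, hf, if_neg hj, one_mul]
    push_cast
    ring_nf
  have key : ∀ l : Fin n,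
      (if (l : ℕ) = (k : ℕ) then (-1 : ℝ) else if (l : ℕ) = (k : ℕ) + 1 then 1 else 0) * cvec n j l
      = (if (l : ℕ) = (k : ℕ) then -f (l : ℕ) else 0)
        + (if (l : ℕ) = (k : ℕ) + 1 then f (l : ℕ) else 0) := by
    intro l
    rw [hcv l]
    split_ifs <;> first | ring1 | (exfalso; omega)
  rw [Finset.sum_congr rfl fun l _ => key l, Finset.sum_add_distrib,
    sum_if_eq n (k : ℕ) (fun m => -f m), sum_if_eq n ((k : ℕ) + 1) f]
  rw [if_pos (by omega), if_pos (by omega)]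
  have : f ((k : ℕ) + 1) - f (k : ℕ) = tau n j * svec n j k := by
    simp only [hf, tau, svec]
    rw [Real.cos_sub_cos]
    push_cast
    have e1 : ((2 * (((k : ℕ) : ℝ) + 1) + 1) * j * Real.pi / (2 * n)
        + (2 * ((k : ℕ) : ℝ) + 1) * j * Real.pi / (2 * n)) / 2
        = (((k : ℕ) : ℝ) + 1) * j * Real.pi / n := by
      field_simp
      try ring
    have e2 : ((2 * (((k : ℕ) : ℝ) + 1) + 1) * j * Real.pi / (2 * n)
        - (2 * ((k : ℕ) : ℝ) + 1) * j * Real.pi / (2 * n)) / 2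
        = (j : ℝ) * Real.pi / (2 * n) := by
      field_simp
      try ring
    rw [e1, e2]
    ring
  rw [← this]
  ring

/-- Theorem 3.1, curl-free part: for `1 ≤ i, j ≤ n-1`, the pair
`(U⁰_{ij}, V⁰_{ij}) = (τ_i · c_i s_jᵀ, τ_j · s_i c_jᵀ)` is an eigen-solution of the
discrete Maxwell eigenvalue problem with eigenvalue `0`. -/
theorem stmt8 (n : ℕ) (hn : 2 ≤ n) (i j : Fin (n - 1))
    (U : Matrix (Fin n) (Fin (n - 1)) ℝ)
    (hU : U = tau n ((i : ℕ) + 1) • Matrix.vecMulVec (cvec n ((i : ℕ) + 1)) (svec n ((j : ℕ) + 1)))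
    (V : Matrix (Fin (n - 1)) (Fin n) ℝ)
    (hV : V = tau n ((j : ℕ) + 1) • Matrix.vecMulVec (svec n ((i : ℕ) + 1)) (cvec n ((j : ℕ) + 1))) :
    U * Amat n - (Bmat n)ᵀ * V * (Bmat n)ᵀ = 0 ∧
    -(Bmat n * U * Bmat n) + Amat n * V = 0 := by
  subst hU hV
  set ti := tau n ((i : ℕ) + 1)
  set tj := tau n ((j : ℕ) + 1)
  set ci := cvec n ((i : ℕ) + 1)
  set cj := cvec n ((j : ℕ) + 1)
  set si := svec n ((i : ℕ) + 1)
  set sj := svec n ((j : ℕ) + 1)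
  have hsB : sj ᵥ* Bmat n = tj • cj := svec_vecMul n ((j : ℕ) + 1) hn (by omega)
  have hsBi : si ᵥ* Bmat n = ti • ci := svec_vecMul n ((i : ℕ) + 1) hn (by omega)
  have hBc : Bmat n *ᵥ ci = ti • si := cvec_mulVec n ((i : ℕ) + 1) hn (by omega)
  have hBts : (Bmat n)ᵀ *ᵥ si = ti • ci := by rw [Matrix.mulVec_transpose, hsBi]
  have hBcj : Bmat n *ᵥ cj = tj • sj := cvec_mulVec n ((j : ℕ) + 1) hn (by omega)
  have A1 : vecMulVec ci sj * Bmat n = tj • vecMulVec ci cj := by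
    rw [vmv_mul, hsB, vmv_smul_right]
  have A2 : vecMulVec ci cj * (Bmat n)ᵀ = tj • vecMulVec ci sj := by
    rw [vmv_mul, Matrix.vecMul_transpose, hBcj, vmv_smul_right]
  have A3 : (Bmat n)ᵀ * vecMulVec si cj = ti • vecMulVec ci cj := by
    rw [mul_vmv, hBts, vmv_smul_left]
  have A4 : Bmat n * vecMulVec ci sj = ti • vecMulVec si sj := by
    rw [mul_vmv, hBc, vmv_smul_left]
  have A5 : vecMulVec si sj * Bmat n = tj • vecMulVec si cj := by
    rw [vmv_mul, hsB, vmv_smul_right]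
  have A6 : Bmat n * vecMulVec ci cj = ti • vecMulVec si cj := by
    rw [mul_vmv, hBc, vmv_smul_left]
  constructor
  · rw [Amat_eq n, Matrix.smul_mul, ← Matrix.mul_assoc, A1, Matrix.smul_mul, A2,
      Matrix.mul_smul, A3, Matrix.smul_mul, Matrix.smul_mul, A2]
    module
  · rw [Amat_eq n, Matrix.mul_smul, A4, Matrix.smul_mul, Matrix.smul_mul, A5,
      Matrix.mul_assoc, Matrix.mul_smul, A3, Matrix.mul_smul, Matrix.mul_smul, A6]
    module
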